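/- The closed unit disk {p ∈ ℝ² : ‖p‖ ≤ 1} admits a proper 7-coloring in which six congruent 60° sectors (excluding the center) receive six distinct colors and the center receives a seventh color: any two points at Euclidean distance exactly 1 receive distinct colors. -/

import Mathlib

/-!
Two points of the same half-open sector have arguments differing, modulo `2π`, by less than
`π/3`, so the cosine of that difference exceeds `1/2`. By the law of cosines the squared distance
of two nonzero points of the unit disk is then below `‖p‖² + ‖q‖² - ‖p‖‖q‖ ≤ (max ‖p‖ ‖q‖)² ≤ 1`.
The centre, with its own colour, is at distance `1` only from nonzero points.
-/

open Real

theorem Int.exists_abs_sub_sub_mul_lt_one_of_floor_modEq {m : ℤ} {x y : ℝ}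
    (h : ⌊x⌋ ≡ ⌊y⌋ [ZMOD m]) : ∃ n : ℤ, |x - y - m * n| < 1 := by
  obtain ⟨n, hn⟩ := h.symm.dvd
  refine ⟨n, ?_⟩
  have hmn : (m * n : ℝ) = ⌊x⌋ - ⌊y⌋ := by exact_mod_cast hn.symm
  rw [hmn, abs_sub_lt_iff]
  constructor <;> linarith [Int.floor_le x, Int.lt_floor_add_one x, Int.floor_le y,
    Int.lt_floor_add_one y]

theorem Real.half_lt_cos_of_abs_sub_lt {θ : ℝ} {n : ℤ} (h : |θ - n * (2 * π)| < π / 3) :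
    1 / 2 < cos θ := by
  rw [← cos_sub_int_mul_two_pi θ n, ← cos_abs, ← cos_pi_div_three]
  exact cos_lt_cos_of_nonneg_of_le_pi (abs_nonneg _) (by linarith [pi_pos]) h

theorem Complex.norm_sub_sq_eq (p q : ℂ) :
    ‖p - q‖ ^ 2 = ‖p‖ ^ 2 + ‖q‖ ^ 2 - 2 * ‖p‖ * ‖q‖ * Real.cos (p.arg - q.arg) := by
  have hsub : ‖p - q‖ ^ 2 = (p.re - q.re) ^ 2 + (p.im - q.im) ^ 2 := by
    rw [Complex.sq_norm, Complex.normSq_apply, Complex.sub_re, Complex.sub_im]; ring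
  rw [hsub, ← Complex.norm_mul_cos_arg p, ← Complex.norm_mul_cos_arg q,
    ← Complex.norm_mul_sin_arg p, ← Complex.norm_mul_sin_arg q, Real.cos_sub]
  linear_combination
    ‖p‖ ^ 2 * Real.sin_sq_add_cos_sq p.arg + ‖q‖ ^ 2 * Real.sin_sq_add_cos_sq q.arg

theorem Complex.norm_sub_lt_one_of_half_lt_cos_arg_sub {p q : ℂ} (hp : ‖p‖ ≤ 1) (hq : ‖q‖ ≤ 1)
    (hp0 : p ≠ 0) (hq0 : q ≠ 0) (h : 1 / 2 < Real.cos (p.arg - q.arg)) : ‖p - q‖ < 1 := by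
  have hpq : 0 < ‖p‖ * ‖q‖ := mul_pos (norm_pos_iff.mpr hp0) (norm_pos_iff.mpr hq0)
  have hsq : ‖p - q‖ ^ 2 < 1 := by
    rw [norm_sub_sq_eq]
    rcases le_total ‖p‖ ‖q‖ with hle | hle <;>
      nlinarith [norm_nonneg p, norm_nonneg q]
  exact (sq_lt_one_iff₀ (norm_nonneg _)).mp hsq

noncomputable def sectorCoord (p : ℂ) : ℝ := (p.arg + π) / (π / 3)

noncomputable def sectorColoring (p : ℂ) : Fin 7 :=
  if p = 0 then 6 else ⟨⌊sectorCoord p⌋.toNat % 6, by omega⟩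

theorem sectorCoord_pos (p : ℂ) : 0 < sectorCoord p :=
  div_pos (by linarith [p.neg_pi_lt_arg]) (by positivity)

theorem half_lt_cos_arg_sub_of_floor_sectorCoord_modEq {p q : ℂ}
    (h : ⌊sectorCoord p⌋ ≡ ⌊sectorCoord q⌋ [ZMOD 6]) : 1 / 2 < cos (p.arg - q.arg) := by
  obtain ⟨n, hn⟩ := Int.exists_abs_sub_sub_mul_lt_one_of_floor_modEq h
  apply half_lt_cos_of_abs_sub_lt (n := n)
  have hangle : p.arg - q.arg - n * (2 * π) =
      (sectorCoord p - sectorCoord q - (6 : ℤ) * n) * (π / 3) := by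
    simp only [sectorCoord]; field_simp; push_cast; ring
  rw [hangle, abs_mul, abs_of_pos (by positivity : 0 < π / 3)]
  exact mul_lt_of_lt_one_left (by positivity) hn

theorem sectorColoring_zero : sectorColoring 0 = 6 := by
  simp [sectorColoring]

theorem sectorColoring_val_of_ne_zero {p : ℂ} (hp : p ≠ 0) :
    (sectorColoring p : ℕ) = ⌊sectorCoord p⌋.toNat % 6 := by
  simp [sectorColoring, hp]

theorem sectorColoring_ne_six {p : ℂ} (hp : p ≠ 0) : sectorColoring p ≠ 6 := by
  intro h
  have := sectorColoring_val_of_ne_zero hp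
  rw [h] at this
  omega

-- `arg p = π` gives `sectorCoord p = 6`, which joins sector `0`: only the floors mod `6` agree.
theorem floor_sectorCoord_modEq_of_sectorColoring_eq {p q : ℂ} (hp : p ≠ 0) (hq : q ≠ 0)
    (h : sectorColoring p = sectorColoring q) :
    ⌊sectorCoord p⌋ ≡ ⌊sectorCoord q⌋ [ZMOD 6] := by
  have hval := congrArg Fin.val h
  rw [sectorColoring_val_of_ne_zero hp, sectorColoring_val_of_ne_zero hq] at hval
  have hp' := Int.floor_nonneg.mpr (sectorCoord_pos p).le
  have hq' := Int.floor_nonneg.mpr (sectorCoord_pos q).le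
  unfold Int.ModEq
  omega

theorem sectorColoring_ne_of_norm_sub_eq_one {p q : ℂ} (hp : ‖p‖ ≤ 1) (hq : ‖q‖ ≤ 1)
    (hpq : ‖p - q‖ = 1) : sectorColoring p ≠ sectorColoring q := by
  intro h
  rcases eq_or_ne p 0 with rfl | hp0
  · have hq0 : q ≠ 0 := by rintro rfl; simp at hpq
    exact sectorColoring_ne_six hq0 (h.symm.trans sectorColoring_zero)
  rcases eq_or_ne q 0 with rfl | hq0
  · exact sectorColoring_ne_six hp0 (h.trans sectorColoring_zero)
  have hcos := half_lt_cos_arg_sub_of_floor_sectorCoord_modEq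
    (floor_sectorCoord_modEq_of_sectorColoring_eq hp0 hq0 h)
  exact (Complex.norm_sub_lt_one_of_half_lt_cos_arg_sub hp hq hp0 hq0 hcos).ne hpq

theorem unit_disk_seven_coloring :
    ∃ c : ℂ → Fin 7,
      (∀ p q : ℂ, ‖p‖ ≤ 1 → ‖q‖ ≤ 1 → ‖p - q‖ = 1 → c p ≠ c q) ∧
      c 0 = 6 ∧
      ∀ p : ℂ, p ≠ 0 →
        (c p : ℕ) = (⌊(p.arg + Real.pi) / (Real.pi / 3)⌋).toNat % 6 :=
  ⟨sectorColoring, fun _ _ => sectorColoring_ne_of_norm_sub_eq_one, sectorColoring_zero,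
    fun _ => sectorColoring_val_of_ne_zero⟩
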